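/- arXiv:1708.08789 — 4 statements merged into one kernel-verified Lean document; each statement's English description precedes it below -/
import Mathlib

section
/- Let t_n be the number of dependency trees with n nodes, defined by the recurrence arising from T(z)(1-T(z))^2 = z. Then for all n ≥ 1, t_n = (1/n) · C(3n-2, n-1), where C denotes the binomial coefficient. -/
/-!
Differentiating `T (1 - T)² = X` gives `T' (1 - T)(1 - 3T) = 1`, and eliminating `T'`, `T''` and `X`
shows that `T` satisfies the linear differential equation `(4X - 27X²) T'' + (2 - 27X) T' + 3T = 2`.
Its coefficients give the recurrence `2(n + 1)(2n + 1) tₙ₊₁ = 3(3n - 1)(3n + 1) tₙ`, which the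
numbers `C(3n - 2, n - 1) / n` satisfy as well, and both sequences start with `t₁ = 1`.
-/

open PowerSeries

namespace PowerSeries

variable {R : Type*} [CommRing R]

theorem coeff_X_mul_derivative (f : R⟦X⟧) (n : ℕ) :
    coeff n (X * d⁄dX R f) = n * coeff n f := by
  cases n with
  | zero => simp
  | succ n => rw [coeff_succ_X_mul, coeff_derivative, mul_comm]; push_cast; rfl

theorem coeff_ofNat_mul (a : ℕ) [a.AtLeastTwo] (f : R⟦X⟧) (n : ℕ) :
    coeff n (ofNat(a) * f) = ofNat(a) * coeff n f := by
  rw [← map_ofNat C, coeff_C_mul]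

theorem coeff_succ_ofNat (a : ℕ) [a.AtLeastTwo] (n : ℕ) :
    coeff (n + 1) (ofNat(a) : R⟦X⟧) = 0 := by
  rw [← map_ofNat C, coeff_C, if_neg n.succ_ne_zero]

end PowerSeries

theorem Nat.choose_three_mul_add_one_recurrence (m : ℕ) :
    2 * (m + 1) * (2 * m + 3) * (3 * m + 4).choose (m + 1) =
      3 * (3 * m + 2) * (3 * m + 4) * (3 * m + 1).choose m := by
  have h₁ := Nat.choose_mul_succ_eq (3 * m + 1) m
  have h₂ := Nat.choose_mul_succ_eq (3 * m + 2) m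
  have h₃ := Nat.add_one_mul_choose_eq (3 * m + 3) m
  rw [show 3 * m + 1 + 1 - m = 2 * m + 2 by omega] at h₁
  rw [show 3 * m + 2 + 1 - m = 2 * m + 3 by omega] at h₂
  zify at h₁ h₂ h₃ ⊢
  linear_combination (-2 * (2 * m + 3)) * h₃ - 2 * (3 * m + 4) * h₂ - 3 * (3 * m + 4) * h₁

namespace DependencyTree

section CommRing

variable {R : Type*} [CommRing R] {T : R⟦X⟧}

theorem derivative_mul_eq_one (hT : T * (1 - T) ^ 2 = X) :
    d⁄dX R T * ((1 - T) * (1 - 3 * T)) = 1 := by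
  have h := congrArg (d⁄dX R) hT
  simp only [Derivation.leibniz, Derivation.leibniz_pow, derivative_X, map_sub,
    Derivation.map_one_eq_zero, smul_eq_mul] at h
  linear_combination h

theorem derivative_derivative_mul (hT : T * (1 - T) ^ 2 = X) :
    d⁄dX R (d⁄dX R T) * ((1 - T) * (1 - 3 * T)) = (4 - 6 * T) * d⁄dX R T ^ 2 := by
  have h := congrArg (d⁄dX R) (derivative_mul_eq_one hT)
  have hD3 : d⁄dX R (3 : R⟦X⟧) = 0 := by exact_mod_cast Derivation.map_natCast _ 3
  simp only [Derivation.leibniz, map_sub, hD3, Derivation.map_one_eq_zero, smul_eq_mul] at h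
  linear_combination h

theorem isUnit_one_sub_mul_one_sub_three_mul (h0 : constantCoeff T = 0) :
    IsUnit ((1 - T) * (1 - 3 * T)) := by
  rw [isUnit_iff_constantCoeff]
  simp [h0]

theorem differential_equation (h0 : constantCoeff T = 0) (hT : T * (1 - T) ^ 2 = X) :
    (4 * X - 27 * X ^ 2) * d⁄dX R (d⁄dX R T) + (2 - 27 * X) * d⁄dX R T + 3 * T = 2 := by
  refine ((isUnit_one_sub_mul_one_sub_three_mul h0).pow 3).mul_left_injective ?_
  have h1 := derivative_mul_eq_one hT
  have h2 := derivative_derivative_mul hT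
  set U := (1 - T) * (1 - 3 * T)
  set P := d⁄dX R T
  -- Multiplied by `U³`, with `P U = 1`, `P' U = (4 - 6T) P²` and `X = T (1 - T)²` substituted,
  -- both sides become the same polynomial in `T`.
  linear_combination ((4 * X - 27 * X ^ 2) * U ^ 2) * h2
    + ((4 * X - 27 * X ^ 2) * (4 - 6 * T) * (P * U + 1) + (2 - 27 * X) * U ^ 2) * h1
    + (108 * X - 162 * T * X + 11 - 84 * T + 216 * T ^ 2 - 216 * T ^ 3 + 81 * T ^ 4) * hT

theorem coeff_one (h0 : constantCoeff T = 0) (hT : T * (1 - T) ^ 2 = X) : coeff 1 T = 1 := by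
  have h := congrArg (coeff 0) (derivative_mul_eq_one hT)
  rw [coeff_zero_eq_constantCoeff_apply, map_mul, ← coeff_zero_eq_constantCoeff_apply,
    coeff_derivative] at h
  simpa [h0] using h

theorem coeff_recurrence (h0 : constantCoeff T = 0) (hT : T * (1 - T) ^ 2 = X) (m : ℕ) :
    2 * (m + 2) * (2 * m + 3) * coeff (m + 2) T =
      3 * (3 * m + 2) * (3 * m + 4) * coeff (m + 1) T := by
  have h := congrArg (coeff (m + 1)) (differential_equation h0 hT)
  have hEuler : (4 * X - 27 * X ^ 2) * d⁄dX R (d⁄dX R T) + (2 - 27 * X) * d⁄dX R T + 3 * T =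
      4 * (X * d⁄dX R (d⁄dX R T)) - 27 * (X * (X * d⁄dX R (d⁄dX R T))) + 2 * d⁄dX R T
        - 27 * (X * d⁄dX R T) + 3 * T := by ring
  rw [hEuler] at h
  simp only [map_add, map_sub, coeff_ofNat_mul, coeff_succ_X_mul, coeff_derivative, Nat.cast_add,
    Nat.cast_one, coeff_X_mul_derivative, coeff_succ_ofNat] at h
  linear_combination h

end CommRing

theorem coeff_succ_eq_choose_div {K : Type*} [Field K] [CharZero K] {T : K⟦X⟧}
    (h0 : constantCoeff T = 0) (hT : T * (1 - T) ^ 2 = X) (m : ℕ) :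
    coeff (m + 1) T = (3 * m + 1).choose m / (m + 1) := by
  induction m with
  | zero => simp [coeff_one h0 hT]
  | succ m ih =>
    have hchoose : ((2 * (m + 1) * (2 * m + 3) * (3 * m + 4).choose (m + 1) : ℕ) : K) =
        (3 * (3 * m + 2) * (3 * m + 4) * (3 * m + 1).choose m : ℕ) :=
      congrArg Nat.cast (Nat.choose_three_mul_add_one_recurrence m)
    have hlead : (2 * ((m : K) + 2) * (2 * m + 3)) ≠ 0 := by norm_cast
    have hm₁ : (m : K) + 1 ≠ 0 := by norm_cast
    have hm₂ : (m : K) + 1 + 1 ≠ 0 := by norm_cast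
    rw [show 3 * (m + 1) + 1 = 3 * m + 4 by ring]
    apply mul_left_cancel₀ hlead
    rw [coeff_recurrence h0 hT m, ih]
    push_cast at hchoose ⊢
    rw [← mul_div_assoc, ← mul_div_assoc, div_eq_div_iff hm₁ hm₂]
    linear_combination (-(m : K) - 2) * hchoose

end DependencyTree

theorem dependency_tree_count_closed_form
    (T : PowerSeries ℚ)
    (h0 : PowerSeries.constantCoeff T = 0)
    (hT : T * (1 - T) ^ 2 = PowerSeries.X) :
    ∀ n : ℕ, 1 ≤ n →
      PowerSeries.coeff n T = (Nat.choose (3 * n - 2) (n - 1) : ℚ) / n := by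
  rintro (_ | m) hm
  · omega
  · rw [DependencyTree.coeff_succ_eq_choose_div h0 hT m, show 3 * (m + 1) - 2 = 3 * m + 1 by omega,
      Nat.add_sub_cancel, Nat.cast_succ]
end

section
/- The number of dependency trees t_n = (1/n)·C(3n-2, n-1) satisfies the asymptotic equivalence t_n ~ (1/(√(27π) · n^{3/2})) · (27/4)^n as n → ∞; i.e., the ratio t_n / ((27/4)^n · n^{-3/2} / √(27π)) tends to 1. -/
open Filter Real Asymptotics Nat Stirling

/-!
Two Pascal-type recurrences give `t_n = 2 C(3n, n) / (3 (3n - 1))`. Stirling's formula for the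
three factorials of `C(3n, n)` gives `C(3n, n) ~ √(3 / (4πn)) (27/4)^n`, and
`3 (3n - 1) / 2 ~ 9n / 2`; the quotient of these equivalents is `(27/4)^n / (√(27π) n^{3/2})`.
-/

lemma factorial_mul_isEquivalent_stirling {k : ℕ} (hk : 0 < k) :
    (fun n : ℕ => ((k * n)! : ℝ)) ~[atTop]
      fun n => √(2 * (k * n : ℕ) * π) * ((k * n : ℕ) / exp 1) ^ (k * n) :=
  factorial_isEquivalent_stirling.comp_tendsto (tendsto_id.const_mul_atTop' hk)

lemma stirling_quotient_eq {q r n : ℕ} (hn : 0 < n) :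
    √(2 * ((q + r) * n : ℕ) * π) * (((q + r) * n : ℕ) / exp 1) ^ ((q + r) * n) /
        (√(2 * (q * n : ℕ) * π) * ((q * n : ℕ) / exp 1) ^ (q * n) *
          (√(2 * (r * n : ℕ) * π) * ((r * n : ℕ) / exp 1) ^ (r * n))) =
      √((q + r) / (2 * π * q * r * n)) * ((q + r) ^ (q + r) / (q ^ q * r ^ r) : ℝ) ^ n := by
  have hsqrt : √(2 * ((q + r) * n : ℕ) * π) /
      (√(2 * (q * n : ℕ) * π) * √(2 * (r * n : ℕ) * π)) =
      √((q + r) / (2 * π * q * r * n)) := by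
    rw [← sqrt_mul (by positivity), ← sqrt_div' _ (by positivity)]
    congr 1
    push_cast
    field_simp
  have hbase : (((q + r : ℕ) : ℝ) * (n / exp 1)) ^ (q + r) /
      ((q * (n / exp 1)) ^ q * (r * (n / exp 1)) ^ r) = (q + r) ^ (q + r) / (q ^ q * r ^ r) := by
    have hx : n / exp 1 ≠ 0 := by positivity
    generalize n / exp 1 = x at hx ⊢
    rw [mul_pow, mul_pow, mul_pow, pow_add x]
    push_cast
    field_simp
  have hpow : ((((q + r) * n : ℕ) : ℝ) / exp 1) ^ ((q + r) * n) /
      (((q * n : ℕ) / exp 1) ^ (q * n) * (((r * n : ℕ) : ℝ) / exp 1) ^ (r * n))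
      = ((q + r) ^ (q + r) / (q ^ q * r ^ r) : ℝ) ^ n := by
    simp only [cast_mul, mul_div_assoc, pow_mul, ← mul_pow, ← div_pow, hbase]
  rw [← hsqrt, ← hpow]
  ring

lemma choose_mul_add_mul_isEquivalent {q r : ℕ} (hq : 0 < q) (hr : 0 < r) :
    (fun n : ℕ => (((q + r) * n).choose (q * n) : ℝ)) ~[atTop]
      fun n => √((q + r) / (2 * π * q * r * n)) *
        ((q + r) ^ (q + r) / (q ^ q * r ^ r) : ℝ) ^ n := by
  have hfac : (fun n : ℕ => (((q + r) * n).choose (q * n) : ℝ)) =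
      fun n => (((q + r) * n)! / ((q * n)! * (r * n)!) : ℝ) := by
    ext n
    rw [cast_choose ℝ (by gcongr; omega), show (q + r) * n - q * n = r * n by rw [add_mul]; omega]
  rw [hfac]
  refine ((factorial_mul_isEquivalent_stirling (by omega)).div
    ((factorial_mul_isEquivalent_stirling hq).mul
      (factorial_mul_isEquivalent_stirling hr))).congr_right ?_
  filter_upwards [eventually_gt_atTop 0] with n hn
  exact stirling_quotient_eq hn

lemma choose_three_mul_isEquivalent :
    (fun n : ℕ => ((3 * n).choose n : ℝ)) ~[atTop]
      fun n => √(3 / (4 * π * n)) * (27 / 4) ^ n := by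
  convert choose_mul_add_mul_isEquivalent one_pos two_pos using 3 with n n
  · norm_num
  · congr 1; push_cast; ring
  · norm_num

lemma three_mul_add_two_mul_choose (m : ℕ) :
    3 * (3 * m + 2) * (3 * m + 1).choose m = 2 * (m + 1) * (3 * m + 3).choose (m + 1) := by
  have h₁ := add_one_mul_choose_eq (3 * m + 2) m
  have h₂ := choose_mul_succ_eq (3 * m + 1) m
  rw [show 3 * m + 1 + 1 - m = 2 * m + 2 by omega] at h₂
  linarith

lemma isEquivalent_natCast_add_const (c : ℝ) :
    (fun n : ℕ => (n : ℝ) + c) ~[atTop] fun n => (n : ℝ) := by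
  have hne : ∀ᶠ n : ℕ in atTop, (n : ℝ) + c ≠ 0 :=
    (tendsto_natCast_atTop_atTop.atTop_add tendsto_const_nhds).eventually_ne_atTop 0
  exact ((isEquivalent_iff_tendsto_one hne).mpr (tendsto_natCast_div_add_atTop c)).symm

lemma choose_three_mul_sub_two_div_eq {n : ℕ} (hn : 0 < n) :
    ((3 * n - 2).choose (n - 1) : ℝ) / n = (3 * n).choose n / (9 / 2 * (n + -1 / 3)) := by
  obtain ⟨m, rfl⟩ : ∃ m, n = m + 1 := ⟨n - 1, by omega⟩
  rw [show 3 * (m + 1) - 2 = 3 * m + 1 by omega, add_tsub_cancel_right, mul_add_one]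
  have h' : (3 * (3 * m + 2) * (3 * m + 1).choose m : ℝ) =
      2 * (m + 1) * (3 * m + 3).choose (m + 1) := by
    exact_mod_cast three_mul_add_two_mul_choose m
  push_cast
  have hm : (0 : ℝ) ≤ m := m.cast_nonneg
  rw [div_eq_div_iff (by positivity) (by linarith)]
  linear_combination h' / 2

lemma sqrt_three_div_mul_pow_div_eq {n : ℕ} (hn : 0 < n) :
    √(3 / (4 * π * n)) * (27 / 4) ^ n / (9 / 2 * n) =
      (27 / 4) ^ n / (√(27 * π) * (n : ℝ) ^ ((3 : ℝ) / 2)) := by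
  have hn' : (0 : ℝ) < n := by exact_mod_cast hn
  have key : √(3 / (4 * π * n)) * √(27 * π) * √n = 9 / 2 := by
    rw [← sqrt_mul (by positivity), ← sqrt_mul (by positivity),
      show 3 / (4 * π * n) * (27 * π) * n = (9 / 2 : ℝ) ^ 2 by field_simp; ring,
      sqrt_sq (by norm_num)]
  rw [show (3 : ℝ) / 2 = 1 + 1 / 2 by norm_num, rpow_add hn', rpow_one, ← sqrt_eq_rpow,
    div_eq_div_iff (by positivity) (by positivity)]
  linear_combination (27 / 4 : ℝ) ^ n * n * key

theorem dependency_tree_count_asymptotic :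
    Filter.Tendsto
      (fun n : ℕ =>
        ((Nat.choose (3 * n - 2) (n - 1) : ℝ) / n) /
          ((27 / 4) ^ n / (Real.sqrt (27 * Real.pi) * (n : ℝ) ^ ((3 : ℝ) / 2))))
      Filter.atTop (nhds 1) := by
  have hden := (IsEquivalent.refl (u := fun _ : ℕ => (9 / 2 : ℝ))).mul
    (isEquivalent_natCast_add_const (-1 / 3))
  have hequiv : (fun n : ℕ => ((3 * n - 2).choose (n - 1) : ℝ) / n) ~[atTop]
      fun n => (27 / 4) ^ n / (√(27 * π) * (n : ℝ) ^ ((3 : ℝ) / 2)) := by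
    refine ((choose_three_mul_isEquivalent.div hden).congr_left ?_).congr_right ?_ <;>
      filter_upwards [eventually_gt_atTop 0] with n hn
    · exact (choose_three_mul_sub_two_div_eq hn).symm
    · exact sqrt_three_div_mul_pow_div_eq hn
  refine (isEquivalent_iff_tendsto_one ?_).mp hequiv
  filter_upwards [eventually_gt_atTop 0] with n hn
  positivity
end

section
/- The radius of convergence of the power series Σ_{n≥1} (1/n)·C(3n-2, n-1) · z^n is exactly 4/27. -/
-- key identity over ℝ: (n+1)(2n+1)(2n+2) C(3n+3,n+1) = (3n+1)(3n+2)(3n+3) C(3n,n)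
lemma choose_id (n : ℕ) :
    ((n:ℝ)+1)*(2*n+1)*(2*n+2) * (((3*n+3).choose (n+1)) : ℝ)
      = ((3:ℝ)*n+1)*(3*n+2)*(3*n+3) * (((3*n).choose n) : ℝ) := by
  have h1 := Nat.add_one_mul_choose_eq (3*n+2) n
  have h2 := Nat.choose_mul_succ_eq (3*n+1) n
  have h3 := Nat.choose_mul_succ_eq (3*n) n
  simp only [Nat.succ_eq_add_one, show 3*n+2+1 = 3*n+3 from rfl,
    show 3*n+1+1 = 3*n+2 from rfl, show 3*n+1+1-n = 2*n+2 by omega,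
    show 3*n+1-n = 2*n+1 by omega] at h1 h2 h3
  have c1 := congrArg (Nat.cast (R := ℝ)) h1
  have c2 := congrArg (Nat.cast (R := ℝ)) h2
  have c3 := congrArg (Nat.cast (R := ℝ)) h3
  push_cast at c1 c2 c3
  linear_combination (-(2*(n:ℝ)+1)*(2*n+2)) * c1 + (-(3*(n:ℝ)+3)*(2*n+1)) * c2
    + (-(3*(n:ℝ)+2)*(3*n+3)) * c3

lemma choose_id2' (m : ℕ) :
    3 * ((3:ℝ)*m+2) * (((3*m+1).choose m) : ℝ) = (2*(m:ℝ)+2) * (((3*m+3).choose (m+1)) : ℝ) := by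
  have h1 := Nat.add_one_mul_choose_eq (3*m+2) m
  have h2 := Nat.choose_mul_succ_eq (3*m+1) m
  simp only [Nat.succ_eq_add_one, show 3*m+2+1 = 3*m+3 from rfl,
    show 3*m+1+1 = 3*m+2 from rfl, show 3*m+1+1-m = 2*m+2 by omega] at h1 h2
  have c1 := congrArg (Nat.cast (R := ℝ)) h1
  have c2 := congrArg (Nat.cast (R := ℝ)) h2
  push_cast at c1 c2
  have hm : ((m:ℝ)+1) ≠ 0 := by positivity
  -- c1 : (3m+3) * C(3m+2,m) = C(3m+3,m+1) * (m+1)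
  -- c2 : C(3m+1,m)*(3m+2) = C(3m+2,m)*(2m+2)
  have key : (3 * ((3:ℝ)*m+2) * (((3*m+1).choose m) : ℝ)) * ((m:ℝ)+1)
      = ((2*(m:ℝ)+2) * (((3*m+3).choose (m+1)) : ℝ)) * ((m:ℝ)+1) := by
    linear_combination (3*((m:ℝ)+1)) * c2 + (2*(m:ℝ)+2) * c1
  exact mul_right_cancel₀ hm key

lemma upper_bound (n : ℕ) : ((3*n).choose n : ℝ) * 4^n ≤ 27^n := by
  induction n with
  | zero => simp
  | succ n ih =>
    have hid := choose_id n
    have e : 3*(n+1) = 3*n+3 := by ring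
    rw [e]
    have hpos : (0:ℝ) < ((n:ℝ)+1)*(2*n+1)*(2*n+2) := by positivity
    apply le_of_mul_le_mul_right _ hpos
    have lhs_eq : (((3*n+3).choose (n+1)) : ℝ) * 4^(n+1) * (((n:ℝ)+1)*(2*n+1)*(2*n+2))
        = 4 * (((3:ℝ)*n+1)*(3*n+2)*(3*n+3)) * (((3*n).choose n : ℝ) * 4^n) := by
      rw [pow_succ]; linear_combination (4 * (4:ℝ)^n) * hid
    rw [lhs_eq, pow_succ]
    have hc : (4:ℝ) * (((3:ℝ)*n+1)*(3*n+2)*(3*n+3)) ≤ 27 * (((n:ℝ)+1)*(2*n+1)*(2*n+2)) := by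
      nlinarith [sq_nonneg ((n:ℝ)), (by positivity : (0:ℝ) ≤ (n:ℝ))]
    have h27 : (0:ℝ) ≤ 27^n := by positivity
    calc 4 * (((3:ℝ)*n+1)*(3*n+2)*(3*n+3)) * (((3*n).choose n : ℝ) * 4^n)
        ≤ 4 * (((3:ℝ)*n+1)*(3*n+2)*(3*n+3)) * 27^n :=
          mul_le_mul_of_nonneg_left ih (by positivity)
      _ ≤ 27 * (((n:ℝ)+1)*(2*n+1)*(2*n+2)) * 27^n := mul_le_mul_of_nonneg_right hc h27
      _ = 27^n * 27 * (((n:ℝ)+1)*(2*n+1)*(2*n+2)) := by ring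

lemma lower_bound (n : ℕ) : (27:ℝ)^n ≤ (3*(n:ℝ)+1) * ((3*n).choose n : ℝ) * 4^n := by
  induction n with
  | zero => simp
  | succ n ih =>
    have hid := choose_id n
    have e : 3*(n+1) = 3*n+3 := by ring
    rw [e]
    have hpos : (0:ℝ) < ((n:ℝ)+1)*(2*n+1)*(2*n+2) := by positivity
    apply le_of_mul_le_mul_right _ hpos
    push_cast
    have rhs_eq : (3*((n:ℝ)+1)+1) * (((3*n+3).choose (n+1)) : ℝ) * 4^(n+1) * (((n:ℝ)+1)*(2*n+1)*(2*n+2))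
        = (3*(n:ℝ)+4) * (((3:ℝ)*n+1)*(3*n+2)*(3*n+3)) * 4 * (((3*n).choose n : ℝ) * 4^n) := by
      rw [pow_succ]; linear_combination ((3*(n:ℝ)+4) * 4 * (4:ℝ)^n) * hid
    rw [rhs_eq, pow_succ]
    have hkey : 27 * (((n:ℝ)+1)*(2*n+1)*(2*n+2)) * (3*(n:ℝ)+1)
        ≤ (3*(n:ℝ)+4) * (((3:ℝ)*n+1)*(3*n+2)*(3*n+3)) * 4 := by
      nlinarith [sq_nonneg ((n:ℝ)), (by positivity : (0:ℝ) ≤ (n:ℝ))]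
    have hA : (0:ℝ) ≤ ((3*n).choose n : ℝ) * 4^n := by positivity
    have h31 : (0:ℝ) < 3*(n:ℝ)+1 := by positivity
    calc 27^n * 27 * (((n:ℝ)+1)*(2*n+1)*(2*n+2))
        ≤ ((3*(n:ℝ)+1) * ((3*n).choose n : ℝ) * 4^n) * 27 * (((n:ℝ)+1)*(2*n+1)*(2*n+2)) := by
          apply mul_le_mul_of_nonneg_right (mul_le_mul_of_nonneg_right ih (by norm_num)) (le_of_lt hpos)
      _ = (27 * (((n:ℝ)+1)*(2*n+1)*(2*n+2)) * (3*(n:ℝ)+1)) * (((3*n).choose n : ℝ) * 4^n) := by ring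
      _ ≤ ((3*(n:ℝ)+4) * (((3:ℝ)*n+1)*(3*n+2)*(3*n+3)) * 4) * (((3*n).choose n : ℝ) * 4^n) :=
          mul_le_mul_of_nonneg_right hkey hA
      _ = (3*(n:ℝ)+4) * (((3:ℝ)*n+1)*(3*n+2)*(3*n+3)) * 4 * (((3*n).choose n : ℝ) * 4^n) := by ring

lemma choose_nonneg' (a b : ℕ) : (0:ℝ) ≤ (a.choose b : ℝ) := by positivity

lemma B_le_D (m : ℕ) : (((3*m+1).choose m) : ℝ) ≤ (((3*m+3).choose (m+1)) : ℝ) := by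
  have h := choose_id2' m
  have hD := choose_nonneg' (3*m+3) (m+1)
  have hm : (0:ℝ) ≤ (m:ℝ) := Nat.cast_nonneg m
  nlinarith [h, hD, hm, mul_nonneg hD hm]

lemma D_le (m : ℕ) : (((3*m+3).choose (m+1)) : ℝ) ≤ (27/4)^(m+1) := by
  have h := upper_bound (m+1)
  rw [show 3*(m+1) = 3*m+3 by ring] at h
  rw [div_pow]
  rw [le_div_iff₀ (by positivity)]
  exact h

lemma coeff_upper (m : ℕ) :
    (((3*m+1).choose m) : ℝ) / ((m:ℝ)+1) ≤ (27/4)^(m+1) := by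
  calc (((3*m+1).choose m) : ℝ) / ((m:ℝ)+1)
      ≤ (((3*m+1).choose m) : ℝ) := div_le_self (choose_nonneg' _ _) (by have : (0:ℝ) ≤ (m:ℝ) := Nat.cast_nonneg m; linarith)
    _ ≤ (((3*m+3).choose (m+1)) : ℝ) := B_le_D m
    _ ≤ (27/4)^(m+1) := D_le m

lemma P_le_D (m : ℕ) : ((27:ℝ)/4)^(m+1) ≤ (3*(m:ℝ)+4) * (((3*m+3).choose (m+1)) : ℝ) := by
  have h := lower_bound (m+1)
  rw [show 3*(m+1) = 3*m+3 by ring] at h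
  push_cast at h
  rw [div_pow, div_le_iff₀ (by positivity : (0:ℝ) < 4^(m+1))]
  linarith [h]

lemma coeff_lower (m : ℕ) :
    ((27:ℝ)/4)^(m+1) / (18*((m:ℝ)+1)^2) ≤ (((3*m+1).choose m) : ℝ) / ((m:ℝ)+1) := by
  set B := (((3*m+1).choose m) : ℝ) with hBdef
  set D := (((3*m+3).choose (m+1)) : ℝ) with hDdef
  set P := ((27:ℝ)/4)^(m+1) with hPdef
  have hB : 3 * ((3:ℝ)*m+2) * B = (2*(m:ℝ)+2) * D := choose_id2' m
  have hD : P ≤ (3*(m:ℝ)+4) * D := P_le_D m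
  have hBnn : (0:ℝ) ≤ B := choose_nonneg' _ _
  have hm : (0:ℝ) ≤ (m:ℝ) := Nat.cast_nonneg m
  have key : P ≤ 18*((m:ℝ)+1) * B := by
    have step1 : (2*(m:ℝ)+2) * P ≤ (2*(m:ℝ)+2) * ((3*(m:ℝ)+4) * D) :=
      mul_le_mul_of_nonneg_left hD (by positivity)
    have step2 : (2*(m:ℝ)+2) * ((3*(m:ℝ)+4) * D) = (3*(m:ℝ)+4) * (3 * ((3:ℝ)*m+2) * B) := by
      linear_combination (-(3*(m:ℝ)+4)) * hB
    have step3 : (3*(m:ℝ)+4) * (3 * ((3:ℝ)*m+2) * B) ≤ (2*(m:ℝ)+2) * (18*((m:ℝ)+1) * B) := by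
      nlinarith [mul_nonneg hBnn hm, mul_nonneg (mul_nonneg hBnn hm) hm, hBnn]
    have := le_trans (le_trans step1 (le_of_eq step2)) step3
    have hpos : (0:ℝ) < 2*(m:ℝ)+2 := by positivity
    nlinarith [this, hpos]
  rw [div_le_div_iff₀ (by positivity) (by positivity)]
  nlinarith [key, mul_nonneg hBnn hm, hBnn]

lemma abs_term (z : ℝ) (m : ℕ) :
    |(Nat.choose (3*(m+1)-2) ((m+1)-1) : ℝ) / ((m+1:ℕ):ℝ) * z^(m+1)|
      = (((3*m+1).choose m) : ℝ) / ((m:ℝ)+1) * |z|^(m+1) := by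
  have e1 : 3*(m+1)-2 = 3*m+1 := by omega
  have e2 : (m+1)-1 = m := rfl
  rw [e1, e2, abs_mul, abs_pow, abs_div, Nat.abs_cast, Nat.abs_cast]
  push_cast
  ring

theorem dependency_tree_gf_radius_of_convergence :
    (∀ z : ℝ, |z| < 4 / 27 →
        Summable (fun n : ℕ => (Nat.choose (3 * n - 2) (n - 1) : ℝ) / n * z ^ n)) ∧
    (∀ z : ℝ, 4 / 27 < |z| →
        ¬ Summable (fun n : ℕ => (Nat.choose (3 * n - 2) (n - 1) : ℝ) / n * z ^ n)) := by
  constructor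
  · intro z hz
    have habs : (0:ℝ) ≤ |z| := abs_nonneg z
    have hq1 : 27/4 * |z| < 1 := by nlinarith
    have hq0 : (0:ℝ) ≤ 27/4 * |z| := by positivity
    have geom : Summable (fun n : ℕ => (27/4 * |z|) ^ n) :=
      summable_geometric_of_lt_one hq0 hq1
    have bound : ∀ n : ℕ,
        |(Nat.choose (3 * n - 2) (n - 1) : ℝ) / n * z ^ n| ≤ (27/4 * |z|) ^ n := by
      intro n
      match n with
      | 0 => norm_num
      | m+1 =>
        rw [abs_term z m, mul_pow]
        exact mul_le_mul_of_nonneg_right (coeff_upper m) (pow_nonneg habs _)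
    have habsum : Summable (fun n : ℕ =>
        |(Nat.choose (3 * n - 2) (n - 1) : ℝ) / n * z ^ n|) :=
      Summable.of_nonneg_of_le (fun n => abs_nonneg _) bound geom
    exact habsum.of_abs
  · intro z hz hsum
    have habs : (0:ℝ) ≤ |z| := abs_nonneg z
    have hq : (1:ℝ) < 27/4 * |z| := by nlinarith
    have hq0 : (0:ℝ) < 27/4 * |z| := by linarith
    set q : ℝ := 27/4 * |z| with hqdef
    have hs : ‖q⁻¹‖ < 1 := by
      rw [Real.norm_eq_abs, abs_of_pos (by positivity)]
      rw [inv_lt_one_iff₀]; right; exact hq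
    have hsum2 : Summable (fun n : ℕ => (n:ℝ)^2 * (q⁻¹)^n) :=
      summable_pow_mul_geometric_of_norm_lt_one 2 hs
    have htend2 : Filter.Tendsto (fun n : ℕ => (n:ℝ)^2 * (q⁻¹)^n) Filter.atTop (nhds 0) :=
      hsum2.tendsto_atTop_zero
    have htend : Filter.Tendsto
        (fun n : ℕ => (Nat.choose (3 * n - 2) (n - 1) : ℝ) / n * z ^ n)
        Filter.atTop (nhds 0) := hsum.tendsto_atTop_zero
    have htendabs : Filter.Tendsto
        (fun n : ℕ => |(Nat.choose (3 * n - 2) (n - 1) : ℝ) / n * z ^ n|)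
        Filter.atTop (nhds 0) := by
      have := htend.abs
      simpa using this
    have h1 : ∀ᶠ n : ℕ in Filter.atTop, (n:ℝ)^2 * (q⁻¹)^n < 1/18 :=
      htend2.eventually_lt_const (by norm_num)
    have h2 : ∀ᶠ n : ℕ in Filter.atTop,
        |(Nat.choose (3 * n - 2) (n - 1) : ℝ) / n * z ^ n| < 1 :=
      htendabs.eventually_lt_const (by norm_num)
    obtain ⟨n, hn⟩ := ((h1.and h2).and (Filter.eventually_ge_atTop 1)).exists
    obtain ⟨⟨hn1, hn2⟩, hn3⟩ := hn
    obtain ⟨m, rfl⟩ : ∃ m, n = m+1 := ⟨n-1, by omega⟩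
    rw [abs_term z m] at hn2
    have hlow : q^(m+1) / (18*((m:ℝ)+1)^2)
        ≤ (((3*m+1).choose m) : ℝ) / ((m:ℝ)+1) * |z|^(m+1) := by
      have := coeff_lower m
      have h' := mul_le_mul_of_nonneg_right this (pow_nonneg habs (m+1))
      calc q^(m+1) / (18*((m:ℝ)+1)^2)
          = ((27:ℝ)/4)^(m+1) / (18*((m:ℝ)+1)^2) * |z|^(m+1) := by
            rw [hqdef, mul_pow]; ring
        _ ≤ (((3*m+1).choose m) : ℝ) / ((m:ℝ)+1) * |z|^(m+1) := h'
    have hlt : q^(m+1) < 18*((m:ℝ)+1)^2 := by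
      have h18 : (0:ℝ) < 18*((m:ℝ)+1)^2 := by positivity
      have := lt_of_le_of_lt hlow hn2
      rw [div_lt_one h18] at this
      exact this
    have hqpow : (0:ℝ) < q^(m+1) := pow_pos hq0 _
    have hsval : (q⁻¹)^(m+1) = (q^(m+1))⁻¹ := by rw [inv_pow]
    have hn1' : ((m:ℝ)+1)^2 * (q^(m+1))⁻¹ < 1/18 := by
      rw [← hsval]
      have : ((m+1:ℕ):ℝ) = (m:ℝ)+1 := by push_cast; ring
      rw [← this]
      exact hn1
    have : ((m:ℝ)+1)^2 < 1/18 * q^(m+1) := by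
      rw [mul_inv_lt_iff₀ hqpow] at hn1'
      linarith [hn1']
    nlinarith [hlt, this]
end

section
/- (27/4)^n / (√(27π) · n^{3/2}) ≤ C(3n-2, n-1)/n ≤ (27/4)^n holds for all sufficiently large n; in particular, (1/n)·C(3n-2,n-1) ≤ (27/4)^n for all n ≥ 1. -/
open Filter Real Nat Topology


noncomputable def A (n : ℕ) : ℝ :=
  Real.sqrt (27*Real.pi) * Real.sqrt n * (Nat.choose (3*n-2) (n-1) : ℝ) / (27/4 : ℝ)^n


lemma chooseR1 (m : ℕ) :
    2 * ((m : ℝ) + 1) * ((m : ℝ) + 1) * (Nat.choose (3 * m + 3) (m + 1) : ℝ)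
      = (3 * (m : ℝ) + 3) * (3 * (m : ℝ) + 2) * (Nat.choose (3 * m + 1) m : ℝ) := by
  have h1 := Nat.choose_mul_factorial_mul_factorial (show m + 1 ≤ 3 * m + 3 by omega)
  have h2 := Nat.choose_mul_factorial_mul_factorial (show m ≤ 3 * m + 1 by omega)
  rw [show 3 * m + 3 - (m + 1) = 2 * m + 2 by omega] at h1
  rw [show 3 * m + 1 - m = 2 * m + 1 by omega] at h2
  have e1 : (3 * m + 3)! = (3 * m + 3) * ((3 * m + 2) * (3 * m + 1)!) := by
    rw [show 3 * m + 3 = (3 * m + 2) + 1 by ring, Nat.factorial_succ,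
      show 3 * m + 2 = (3 * m + 1) + 1 by ring, Nat.factorial_succ]
  have e2 : (m + 1)! = (m + 1) * m ! := Nat.factorial_succ m
  have e3 : (2 * m + 2)! = (2 * m + 2) * (2 * m + 1)! := by
    rw [show 2 * m + 2 = (2 * m + 1) + 1 by ring, Nat.factorial_succ]
  rw [e1, e2, e3] at h1
  have hr1 := congrArg (Nat.cast : ℕ → ℝ) h1
  have hr2 := congrArg (Nat.cast : ℕ → ℝ) h2
  push_cast at hr1 hr2
  have hf : (0:ℝ) < (m ! : ℝ) * ((2*m+1)! : ℝ) := by positivity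
  apply mul_right_cancel₀ (ne_of_gt hf)
  linear_combination hr1 - (3*(m:ℝ)+3)*(3*(m:ℝ)+2)*hr2

lemma chooseR2 (m : ℕ) :
    2 * ((m : ℝ) + 1) * (2 * (m : ℝ) + 3) * (Nat.choose (3 * m + 4) (m + 1) : ℝ)
      = 3 * (3 * (m : ℝ) + 4) * (3 * (m : ℝ) + 2) * (Nat.choose (3 * m + 1) m : ℝ) := by
  have h1 := Nat.choose_mul_factorial_mul_factorial (show m + 1 ≤ 3 * m + 4 by omega)
  have h2 := Nat.choose_mul_factorial_mul_factorial (show m ≤ 3 * m + 1 by omega)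
  rw [show 3 * m + 4 - (m + 1) = 2 * m + 3 by omega] at h1
  rw [show 3 * m + 1 - m = 2 * m + 1 by omega] at h2
  have e1 : (3 * m + 4)! = (3 * m + 4) * ((3 * m + 3) * ((3 * m + 2) * (3 * m + 1)!)) := by
    rw [show 3 * m + 4 = (3 * m + 3) + 1 by ring, Nat.factorial_succ,
      show 3 * m + 3 = (3 * m + 2) + 1 by ring, Nat.factorial_succ,
      show 3 * m + 2 = (3 * m + 1) + 1 by ring, Nat.factorial_succ]
  have e2 : (m + 1)! = (m + 1) * m ! := Nat.factorial_succ m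
  have e3 : (2 * m + 3)! = (2 * m + 3) * ((2 * m + 2) * (2 * m + 1)!) := by
    rw [show 2 * m + 3 = (2 * m + 2) + 1 by ring, Nat.factorial_succ,
      show 2 * m + 2 = (2 * m + 1) + 1 by ring, Nat.factorial_succ]
  rw [e1, e2, e3] at h1
  have hr1 := congrArg (Nat.cast : ℕ → ℝ) h1
  have hr2 := congrArg (Nat.cast : ℕ → ℝ) h2
  push_cast at hr1 hr2
  have hf : (0:ℝ) < ((m:ℝ)+1) * ((m ! : ℝ) * ((2*m+1)! : ℝ)) := by positivity
  apply mul_right_cancel₀ (ne_of_gt hf)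
  linear_combination hr1 - (3*(m:ℝ)+4)*(3*(m:ℝ)+3)*(3*(m:ℝ)+2)*hr2

lemma choose_upper (n : ℕ) : (Nat.choose (3*n) n : ℝ) * 4 ^ n ≤ 27 ^ n := by
  have h : Nat.choose (3*n) n * 2 ^ (2*n) ≤ 3 ^ (3*n) := by
    have h3 : (3:ℕ)^(3*n) = (1+2)^(3*n) := by norm_num
    rw [h3, add_pow]
    have hmem : n ∈ Finset.range (3*n+1) := Finset.mem_range.2 (by omega)
    have hle := Finset.single_le_sum
      (f := fun k => 1 ^ k * 2 ^ (3*n - k) * ((3*n).choose k : ℕ))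
      (fun i _ => Nat.zero_le _) hmem
    have he : (1:ℕ) ^ n * 2 ^ (3*n - n) * ((3*n).choose n) = (3*n).choose n * 2 ^ (2*n) := by
      rw [show 3*n - n = 2*n by omega]; ring
    exact he ▸ hle
  calc (Nat.choose (3*n) n : ℝ) * 4 ^ n = ((Nat.choose (3*n) n * 2 ^ (2*n) : ℕ) : ℝ) := by
        push_cast [pow_mul]; ring
    _ ≤ ((3 ^ (3*n) : ℕ) : ℝ) := by exact_mod_cast h
    _ = 27 ^ n := by push_cast [pow_mul]; norm_num

lemma fact_eq (k : ℕ) (hk : 1 ≤ k) :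
    (k ! : ℝ) = Stirling.stirlingSeq k * (Real.sqrt (2*(k:ℝ)) * ((k:ℝ)/Real.exp 1)^k) := by
  have hk' : (0:ℝ) < (k:ℝ) := by exact_mod_cast hk
  have h : Real.sqrt (2*(k:ℝ)) * ((k:ℝ)/Real.exp 1)^k ≠ 0 := by positivity
  rw [Stirling.stirlingSeq, div_mul_cancel₀ _ h]

lemma w_id (n : ℕ) (hn : 1 ≤ n) :
    (Real.sqrt (2*(n:ℝ)) * ((n:ℝ)/Real.exp 1)^n)
      * (Real.sqrt (2*(2*(n:ℝ))) * ((2*(n:ℝ))/Real.exp 1)^(2*n))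
      * (Real.sqrt 3 * (27/4 : ℝ)^n)
    = (Real.sqrt (2*(3*(n:ℝ))) * ((3*(n:ℝ))/Real.exp 1)^(3*n)) * (Real.sqrt (n:ℝ) * 2) := by
  have hn0 : (0:ℝ) ≤ (n:ℝ) := n.cast_nonneg
  have e2 : (2*(n:ℝ))/Real.exp 1 = 2*((n:ℝ)/Real.exp 1) := by ring
  have e3 : (3*(n:ℝ))/Real.exp 1 = 3*((n:ℝ)/Real.exp 1) := by ring
  rw [e2, e3, mul_pow, mul_pow]
  have p2 : (2:ℝ)^(2*n) = 4^n := by rw [pow_mul]; norm_num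
  have p3 : (3:ℝ)^(3*n) = 27^n := by rw [pow_mul]; norm_num
  rw [p2, p3]
  have hp : (4:ℝ)^n * (27/4:ℝ)^n = 27^n := by rw [← mul_pow]; norm_num
  have hs : Real.sqrt (2*(n:ℝ)) * Real.sqrt (2*(2*(n:ℝ))) * Real.sqrt 3
      = Real.sqrt (2*(3*(n:ℝ))) * Real.sqrt (n:ℝ) * 2 := by
    have h4 : Real.sqrt 4 = 2 := by
      rw [show (4:ℝ) = 2^2 by norm_num, Real.sqrt_sq (by norm_num : (0:ℝ) ≤ 2)]
    rw [← Real.sqrt_mul (by positivity), ← Real.sqrt_mul (by positivity),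
      show (2*(n:ℝ)*(2*(2*(n:ℝ)))*3) = (2*(3*(n:ℝ)))*((n:ℝ)*4) by ring,
      Real.sqrt_mul (by positivity), Real.sqrt_mul hn0, h4]
    ring
  linear_combination (((n:ℝ)/Real.exp 1)^n * ((n:ℝ)/Real.exp 1)^(2*n) * ((4:ℝ)^n*(27/4:ℝ)^n)) * hs
    + (((n:ℝ)/Real.exp 1)^n * ((n:ℝ)/Real.exp 1)^(2*n)
        * (Real.sqrt (2*(3*(n:ℝ))) * Real.sqrt (n:ℝ) * 2)) * hp

lemma stirling_id (n : ℕ) (hn : 1 ≤ n) :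
    (Nat.choose (3*n) n : ℝ) * Real.sqrt n
        * (Stirling.stirlingSeq n * Stirling.stirlingSeq (2*n)) * 2
      = Stirling.stirlingSeq (3*n) * Real.sqrt 3 * (27/4 : ℝ)^n := by
  have hn' : (0:ℝ) < (n:ℝ) := by exact_mod_cast hn
  have f1 := fact_eq n hn
  have f2 := fact_eq (2*n) (by omega)
  have f3 := fact_eq (3*n) (by omega)
  push_cast at f2 f3
  have e1 := Nat.choose_mul_factorial_mul_factorial (show n ≤ 3*n by omega)
  rw [show 3*n - n = 2*n by omega] at e1
  have e1r := congrArg (Nat.cast : ℕ → ℝ) e1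
  push_cast at e1r
  rw [f1, f2, f3] at e1r
  have hw := w_id n hn
  have hwn : Real.sqrt (2*(n:ℝ)) * ((n:ℝ)/Real.exp 1)^n ≠ 0 := by positivity
  have hw2n : Real.sqrt (2*(2*(n:ℝ))) * ((2*(n:ℝ))/Real.exp 1)^(2*n) ≠ 0 := by positivity
  apply mul_right_cancel₀ (mul_ne_zero hwn hw2n)
  linear_combination (2*Real.sqrt (n:ℝ)) * e1r - Stirling.stirlingSeq (3*n) * hw

lemma sqrt27pi : Real.sqrt (27*Real.pi) = 3 * Real.sqrt 3 * Real.sqrt Real.pi := by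
  rw [Real.sqrt_mul (by norm_num), show (27:ℝ) = 3^2*3 by norm_num,
    Real.sqrt_mul (by positivity), Real.sqrt_sq (by norm_num : (0:ℝ) ≤ 3)]

lemma A_eq (n : ℕ) (hn : 1 ≤ n) :
    A n = Real.sqrt Real.pi * (3*(n:ℝ)/(3*(n:ℝ)-1))
      * (Stirling.stirlingSeq (3*n) / (Stirling.stirlingSeq n * Stirling.stirlingSeq (2*n))) := by
  obtain ⟨m, rfl⟩ : ∃ m, n = m + 1 := ⟨n - 1, by omega⟩
  have hs1 : 0 < Stirling.stirlingSeq (m+1) := Stirling.stirlingSeq'_pos m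
  have hs2 : 0 < Stirling.stirlingSeq (2*m+2) := Stirling.stirlingSeq'_pos (2*m+1)
  have hs3 : 0 < Stirling.stirlingSeq (3*m+3) := Stirling.stirlingSeq'_pos (3*m+2)
  have hb : Real.sqrt 3 * Real.sqrt 3 = 3 := Real.mul_self_sqrt (by norm_num)
  have hcr := chooseR1 m
  have hsi := stirling_id (m+1) (by omega)
  rw [show 3*(m+1) = 3*m+3 by ring, show 2*(m+1) = 2*m+2 by ring] at hsi ⊢
  have hν : (0:ℝ) < (m:ℝ) + 1 := by positivity
  have h3ν : (3*((m+1:ℕ):ℝ)-1) ≠ 0 := by push_cast; nlinarith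
  have hP : ((27:ℝ)/4)^(m+1) ≠ 0 := by positivity
  unfold A
  rw [show 3*(m+1)-2 = 3*m+1 by omega, show (m+1)-1 = m by omega, sqrt27pi]
  have hr : Real.sqrt Real.pi * (3*((m+1:ℕ):ℝ)/(3*((m+1:ℕ):ℝ)-1))
      * (Stirling.stirlingSeq (3*m+3) / (Stirling.stirlingSeq (m+1) * Stirling.stirlingSeq (2*m+2)))
      = (Real.sqrt Real.pi * (3*((m+1:ℕ):ℝ)) * Stirling.stirlingSeq (3*m+3))
        / ((3*((m+1:ℕ):ℝ)-1) * (Stirling.stirlingSeq (m+1) * Stirling.stirlingSeq (2*m+2))) := by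
    field_simp
  have h3ν' : (0:ℝ) < 3*((m+1:ℕ):ℝ)-1 := by push_cast; nlinarith
  have hD : (0:ℝ) < (3*((m+1:ℕ):ℝ)-1) * (Stirling.stirlingSeq (m+1) * Stirling.stirlingSeq (2*m+2)) := by positivity
  rw [hr, div_eq_div_iff hP hD.ne']
  push_cast at hsi hcr ⊢
  apply mul_right_cancel₀ (show (6*((m:ℝ)+1)) ≠ 0 by positivity)
  linear_combination (-(2*(3*Real.sqrt 3*Real.sqrt Real.pi)*Real.sqrt ((m:ℝ)+1)
      * Stirling.stirlingSeq (m+1) * Stirling.stirlingSeq (2*m+2))) * hcr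
    + (2*((m:ℝ)+1)^2*(3*Real.sqrt 3*Real.sqrt Real.pi)) * hsi
    + (6*((m:ℝ)+1)^2*Real.sqrt Real.pi*Stirling.stirlingSeq (3*m+3)*(27/4:ℝ)^(m+1)) * hb

lemma sqrt_helper (a b : ℝ) (ha : 0 ≤ a) (hb : 0 ≤ b) : a * Real.sqrt b = Real.sqrt (a^2*b) := by
  rw [Real.sqrt_mul (by positivity), Real.sqrt_sq ha]

lemma A_step (n : ℕ) (hn : 1 ≤ n) : A (n+1) ≤ A n := by
  obtain ⟨m, rfl⟩ : ∃ m, n = m + 1 := ⟨n - 1, by omega⟩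
  set ν : ℝ := (m:ℝ) + 1 with hνdef
  have hν1 : (1:ℝ) ≤ ν := by simp [hνdef]
  have hν : (0:ℝ) < ν := by linarith
  unfold A
  rw [show 3*(m+1+1)-2 = 3*m+4 by omega, show (m+1+1)-1 = m+1 by omega,
    show 3*(m+1)-2 = 3*m+1 by omega, show (m+1)-1 = m by omega]
  rw [div_le_div_iff₀ (by positivity) (by positivity)]
  have hcr := chooseR2 m
  have hq : (0:ℝ) ≤ Real.sqrt (27*Real.pi) := Real.sqrt_nonneg _
  have hC' : (0:ℝ) ≤ (Nat.choose (3*m+1) m : ℝ) := by positivity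
  -- key scalar inequality: √(ν+1) * C₃ ≤ (27/4) * √ν * C'
  have hkey : Real.sqrt (ν+1) * (Nat.choose (3*m+4) (m+1) : ℝ)
      ≤ (27/4) * Real.sqrt ν * (Nat.choose (3*m+1) m : ℝ) := by
    have hs : 2*(9*ν^2-1) * Real.sqrt (ν+1) ≤ 9*ν*(2*ν+1) * Real.sqrt ν := by
      rw [sqrt_helper _ _ (by nlinarith) (by positivity),
        sqrt_helper _ _ (by positivity) (by positivity)]
      apply Real.sqrt_le_sqrt
      nlinarith [sq_nonneg ν, sq_nonneg (ν-1)]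
    have h6 : Real.sqrt (ν+1) * (Nat.choose (3*m+4) (m+1) : ℝ) * (2*ν*(2*ν+1))
        = (3/2) * (Nat.choose (3*m+1) m : ℝ) * (2*(9*ν^2-1) * Real.sqrt (ν+1)) := by
      have : (2*ν*(2*ν+1)) * (Nat.choose (3*m+4) (m+1) : ℝ)
          = 3*(3*ν+1)*(3*ν-1) * (Nat.choose (3*m+1) m : ℝ) := by
        push_cast at hcr ⊢
        linear_combination hcr
      nlinarith [this, Real.sqrt_nonneg (ν+1)]
    have h5 : (3/2) * (Nat.choose (3*m+1) m : ℝ) * (2*(9*ν^2-1) * Real.sqrt (ν+1))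
        ≤ (3/2) * (Nat.choose (3*m+1) m : ℝ) * (9*ν*(2*ν+1) * Real.sqrt ν) := by
      apply mul_le_mul_of_nonneg_left hs (by positivity)
    have h7 : (3/2) * (Nat.choose (3*m+1) m : ℝ) * (9*ν*(2*ν+1) * Real.sqrt ν)
        = (27/4) * Real.sqrt ν * (Nat.choose (3*m+1) m : ℝ) * (2*ν*(2*ν+1)) := by ring
    have h8 : Real.sqrt (ν+1) * (Nat.choose (3*m+4) (m+1) : ℝ) * (2*ν*(2*ν+1))
        ≤ (27/4) * Real.sqrt ν * (Nat.choose (3*m+1) m : ℝ) * (2*ν*(2*ν+1)) := by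
      rw [h6]; rw [h7] at h5; exact h5
    exact le_of_mul_le_mul_right h8 (by positivity)
  have hcast1 : ((m+1+1:ℕ):ℝ) = ν + 1 := by push_cast [hνdef]; ring
  have hcast2 : ((m+1:ℕ):ℝ) = ν := by push_cast [hνdef]; ring
  rw [hcast1, hcast2, pow_succ]
  calc Real.sqrt (27*Real.pi) * Real.sqrt (ν+1) * (Nat.choose (3*m+4) (m+1) : ℝ) * (27/4:ℝ)^(m+1)
      = Real.sqrt (27*Real.pi) * (Real.sqrt (ν+1) * (Nat.choose (3*m+4) (m+1) : ℝ)) * (27/4:ℝ)^(m+1) := by ring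
    _ ≤ Real.sqrt (27*Real.pi) * ((27/4) * Real.sqrt ν * (Nat.choose (3*m+1) m : ℝ)) * (27/4:ℝ)^(m+1) := by
        apply mul_le_mul_of_nonneg_right (mul_le_mul_of_nonneg_left hkey hq) (by positivity)
    _ = Real.sqrt (27*Real.pi) * Real.sqrt ν * (Nat.choose (3*m+1) m : ℝ) * ((27/4:ℝ)^(m+1) * (27/4)) := by ring

lemma tendsto_A : Tendsto (fun k : ℕ => A (k+1)) atTop (𝓝 1) := by
  have hπ : Real.sqrt Real.pi ≠ 0 := by positivity
  have hmul : ∀ c : ℕ, 0 < c → Tendsto (fun k : ℕ => c*(k+1)) atTop atTop := by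
    intro c hc
    apply tendsto_atTop_atTop.2
    exact fun b => ⟨b, fun a ha => by nlinarith⟩
  have hs1 : Tendsto (fun k : ℕ => Stirling.stirlingSeq (1*(k+1))) atTop (𝓝 (Real.sqrt Real.pi)) :=
    Stirling.tendsto_stirlingSeq_sqrt_pi.comp (hmul 1 one_pos)
  have hs2 : Tendsto (fun k : ℕ => Stirling.stirlingSeq (2*(k+1))) atTop (𝓝 (Real.sqrt Real.pi)) :=
    Stirling.tendsto_stirlingSeq_sqrt_pi.comp (hmul 2 two_pos)
  have hs3 : Tendsto (fun k : ℕ => Stirling.stirlingSeq (3*(k+1))) atTop (𝓝 (Real.sqrt Real.pi)) :=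
    Stirling.tendsto_stirlingSeq_sqrt_pi.comp (hmul 3 three_pos)
  have hratio : Tendsto (fun k : ℕ => 3*((k+1:ℕ):ℝ)/(3*((k+1:ℕ):ℝ)-1)) atTop (𝓝 1) := by
    have hden : Tendsto (fun k : ℕ => 3*((k+1:ℕ):ℝ)-1) atTop atTop := by
      have h1 : Tendsto (fun k : ℕ => 3*((k:ℝ))) atTop atTop :=
        tendsto_natCast_atTop_atTop.const_mul_atTop (by norm_num : (0:ℝ) < 3)
      exact (tendsto_atTop_add_const_right atTop 2 h1).congr (by intro k; push_cast; ring)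
    have hinv : Tendsto (fun k : ℕ => (3*((k+1:ℕ):ℝ)-1)⁻¹) atTop (𝓝 0) := hden.inv_tendsto_atTop
    have heq : ∀ k : ℕ, 3*((k+1:ℕ):ℝ)/(3*((k+1:ℕ):ℝ)-1) = 1 + (3*((k+1:ℕ):ℝ)-1)⁻¹ := by
      intro k
      have hne : 3*((k:ℝ)+1)-1 ≠ 0 := by nlinarith [Nat.cast_nonneg (α := ℝ) k]
      have hne' : 3*((k+1:ℕ):ℝ)-1 ≠ 0 := by push_cast; exact hne
      field_simp [hne']
      ring
    have hlim : Tendsto (fun k : ℕ => 1 + (3*((k+1:ℕ):ℝ)-1)⁻¹) atTop (𝓝 (1+0)) :=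
      tendsto_const_nhds.add hinv
    simpa using hlim.congr (fun k => (heq k).symm)
  have hall : Tendsto (fun k : ℕ => Real.sqrt Real.pi * (3*((k+1:ℕ):ℝ)/(3*((k+1:ℕ):ℝ)-1))
      * (Stirling.stirlingSeq (3*(k+1)) / (Stirling.stirlingSeq (k+1) * Stirling.stirlingSeq (2*(k+1)))))
      atTop (𝓝 (Real.sqrt Real.pi * 1 * (Real.sqrt Real.pi / (Real.sqrt Real.pi * Real.sqrt Real.pi)))) := by
    apply Tendsto.mul
    · exact (tendsto_const_nhds.mul hratio)
    · apply Tendsto.div hs3 ((hs1.congr (by intro k; rw [one_mul])).mul hs2)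
      positivity
  have hval : Real.sqrt Real.pi * 1 * (Real.sqrt Real.pi / (Real.sqrt Real.pi * Real.sqrt Real.pi)) = 1 := by
    field_simp
  rw [hval] at hall
  exact Tendsto.congr (fun k => (A_eq (k+1) (by omega)).symm) hall

lemma one_le_A (n : ℕ) (hn : 1 ≤ n) : 1 ≤ A n := by
  have hanti : Antitone (fun k : ℕ => A (k+1)) :=
    antitone_nat_of_succ_le (fun k => A_step (k+1) (by omega))
  have := hanti.le_of_tendsto tendsto_A (n-1)
  rwa [show n-1+1 = n by omega] at this

theorem dependency_tree_count_bounds :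
    (∃ N : ℕ, ∀ n : ℕ, N ≤ n →
        (27 / 4) ^ n / (Real.sqrt (27 * Real.pi) * (n : ℝ) ^ ((3 : ℝ) / 2)) ≤
          (Nat.choose (3 * n - 2) (n - 1) : ℝ) / n) ∧
    (∀ n : ℕ, 1 ≤ n →
        (Nat.choose (3 * n - 2) (n - 1) : ℝ) / n ≤ (27 / 4) ^ n) := by
  constructor
  · refine ⟨1, fun n hn => ?_⟩
    have hn' : (0:ℝ) < n := by exact_mod_cast hn
    have hA := one_le_A n hn
    unfold A at hA
    rw [le_div_iff₀ (by positivity)] at hA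
    have h32 : (n:ℝ) ^ ((3:ℝ)/2) = (n:ℝ) * Real.sqrt n := by
      rw [show (3:ℝ)/2 = 1 + 1/2 by norm_num, Real.rpow_add hn', Real.rpow_one,
        ← Real.sqrt_eq_rpow]
    rw [h32, div_le_div_iff₀ (by positivity) hn']
    nlinarith [hA, Real.sqrt_nonneg (27*Real.pi), Real.sqrt_nonneg (n:ℝ),
      pow_pos (show (0:ℝ) < 27/4 by norm_num) n]
  · intro n hn
    have h1 : Nat.choose (3*n-2) (n-1) ≤ Nat.choose (3*n) (n-1) :=
      Nat.choose_le_choose _ (by omega)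
    have h2 : Nat.choose (3*n) (n-1) ≤ Nat.choose (3*n) n := by
      have := Nat.choose_le_succ_of_lt_half_left (show n-1 < 3*n/2 by omega)
      rwa [show n-1+1 = n by omega] at this
    have h3 : (Nat.choose (3*n) n : ℝ) ≤ (27/4:ℝ)^n := by
      have := choose_upper n
      rw [div_pow, le_div_iff₀ (by positivity : (0:ℝ) < (4:ℝ)^n)]
      linarith
    calc (Nat.choose (3*n-2) (n-1) : ℝ) / n ≤ (Nat.choose (3*n-2) (n-1) : ℝ) := by
          apply _root_.div_le_self (by positivity) (by exact_mod_cast hn)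
      _ ≤ (Nat.choose (3*n) n : ℝ) := by exact_mod_cast le_trans h1 h2
      _ ≤ (27/4:ℝ)^n := h3
end
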